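/- arXiv:0810.2027 — 2 statements merged into one kernel-verified Lean document; each statement's English description precedes it below -/
import Mathlib

section
/- Let G be a finitely generated profinite group and let 0 → M' → M → M'' → 0 be a short exact sequence of nonzero finite G-modules with finite cohomology. Define χ̄₁(G,A) = (dim H¹(G,A) − dim H⁰(G,A))/dim(A). Then χ̄₁(G,M) ≤ max{χ̄₁(G,M'), χ̄₁(G,M'')}. -/
/-- The length of a finite abelian group as a `ℤ`-module: the number of prime factors
(with multiplicity) of its order. -/
noncomputable def lenZ (M : Type*) : ℕ := (Nat.card M).primeFactorsList.length

/-- The normalized partial Euler characteristic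
`χ̄₁(G,A) = (dim H¹(G,A) − dim H⁰(G,A)) / dim A`. -/
noncomputable def chiBar1 {G : Type} [Group G] (A : Rep ℤ G) : ℚ :=
  ((lenZ (groupCohomology A 1) : ℚ) - (lenZ (groupCohomology A 0) : ℚ)) / (lenZ A : ℚ)

/-- A profinite group is topologically finitely generated. -/
def TopFG (G : Type) [Group G] [TopologicalSpace G] [IsTopologicalGroup G] : Prop :=
  ∃ S : Finset G, (Subgroup.closure (S : Set G)).topologicalClosure = ⊤

/-!
Cut the long exact cohomology sequence of finite groups off after the sixth term:
`0 → H⁰(M') → H⁰(M) → H⁰(M'') → H¹(M') → H¹(M) → H¹(M'')`.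
Additivity of length along it, with the last map not necessarily onto, shows that
`h¹ - h⁰` is subadditive: `h¹(M) - h⁰(M) ≤ (h¹(M') - h⁰(M')) + (h¹(M'') - h⁰(M''))`,
while `dim M = dim M' + dim M''`. The claim is then the mediant inequality
`(a + c) / (b + d) ≤ max (a / b) (c / d)`.
-/

universe u

open CategoryTheory ArithmeticFunction
open scoped ArithmeticFunction.Omega

theorem ArithmeticFunction.cardFactors_le_of_dvd {m n : ℕ} (h : m ∣ n) (hn : n ≠ 0) :
    Ω m ≤ Ω n := by
  obtain ⟨c, rfl⟩ := h
  rw [cardFactors_mul (left_ne_zero_of_mul hn) (right_ne_zero_of_mul hn)]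
  exact Nat.le_add_right _ _

theorem lenZ_eq_cardFactors (M : Type*) : lenZ M = Ω (Nat.card M) :=
  cardFactors_apply.symm

theorem lenZ_congr {M N : Type*} (e : M ≃ N) : lenZ M = lenZ N := by
  rw [lenZ, lenZ, Nat.card_congr e]

theorem lenZ_pos (M : Type*) [Finite M] [Nontrivial M] : 0 < lenZ M := by
  rw [lenZ_eq_cardFactors, cardFactors_pos_iff_one_lt]
  exact Finite.one_lt_card

theorem lenZ_addSubgroup_le {B : Type*} [AddGroup B] [Finite B] (H : AddSubgroup B) :
    lenZ H ≤ lenZ B := by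
  simp only [lenZ_eq_cardFactors]
  exact cardFactors_le_of_dvd H.card_addSubgroup_dvd_card Nat.card_pos.ne'

section Linear

variable {R A B C : Type*} [Ring R] [AddCommGroup A] [AddCommGroup B] [AddCommGroup C]
  [Module R A] [Module R B] [Module R C]

theorem lenZ_eq_lenZ_range_add_lenZ_ker [Finite A] (f : A →ₗ[R] B) :
    lenZ A = lenZ (LinearMap.range f) + lenZ (LinearMap.ker f) := by
  have hA : Nat.card A = Nat.card (LinearMap.range f) * Nat.card (LinearMap.ker f) := by
    rw [AddSubgroup.card_eq_card_quotient_mul_card_addSubgroup (LinearMap.ker f).toAddSubgroup]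
    exact congrArg (· * _) (Nat.card_congr f.quotKerEquivRange.toEquiv)
  have h0 : Nat.card A ≠ 0 := Nat.card_pos.ne'
  rw [hA] at h0
  simp only [lenZ_eq_cardFactors, hA]
  exact cardFactors_mul (left_ne_zero_of_mul h0) (right_ne_zero_of_mul h0)

theorem lenZ_range_of_injective {f : A →ₗ[R] B} (hf : Function.Injective f) :
    lenZ (LinearMap.range f) = lenZ A :=
  lenZ_congr (LinearEquiv.ofInjective f hf).toEquiv.symm

theorem lenZ_range_of_surjective {g : B →ₗ[R] C} (hg : Function.Surjective g) :
    lenZ (LinearMap.range g) = lenZ C := by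
  rw [LinearMap.range_eq_top.mpr hg]
  exact lenZ_congr Submodule.topEquiv.toEquiv

theorem lenZ_eq_add_of_exact [Finite B] {f : A →ₗ[R] B} {g : B →ₗ[R] C}
    (hf : Function.Injective f) (hg : Function.Surjective g) (hfg : Function.Exact f g) :
    lenZ B = lenZ A + lenZ C := by
  rw [lenZ_eq_lenZ_range_add_lenZ_ker g, LinearMap.exact_iff.mp hfg,
    lenZ_range_of_injective hf, lenZ_range_of_surjective hg, add_comm]

theorem lenZ_add_le_of_exact {D E F : Type*} [AddCommGroup D] [AddCommGroup E] [AddCommGroup F]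
    [Module R D] [Module R E] [Module R F]
    [Finite B] [Finite C] [Finite D] [Finite E] [Finite F]
    {f₀ : A →ₗ[R] B} {g₀ : B →ₗ[R] C} {δ : C →ₗ[R] D} {f₁ : D →ₗ[R] E} {g₁ : E →ₗ[R] F}
    (hf₀ : Function.Injective f₀) (hB : Function.Exact f₀ g₀) (hC : Function.Exact g₀ δ)
    (hD : Function.Exact δ f₁) (hE : Function.Exact f₁ g₁) :
    lenZ A + lenZ C + lenZ E ≤ lenZ B + lenZ D + lenZ F := by
  -- each term is the length of its image plus that of the previous image; these telescope,
  -- leaving the image of `g₁` inside `F`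
  have lenB := lenZ_eq_lenZ_range_add_lenZ_ker g₀
  have lenC := lenZ_eq_lenZ_range_add_lenZ_ker δ
  have lenD := lenZ_eq_lenZ_range_add_lenZ_ker f₁
  have lenE := lenZ_eq_lenZ_range_add_lenZ_ker g₁
  rw [LinearMap.exact_iff.mp hB, lenZ_range_of_injective hf₀] at lenB
  rw [LinearMap.exact_iff.mp hC] at lenC
  rw [LinearMap.exact_iff.mp hD] at lenD
  rw [LinearMap.exact_iff.mp hE] at lenE
  have lenF : lenZ (LinearMap.range g₁) ≤ lenZ F :=
    lenZ_addSubgroup_le (LinearMap.range g₁).toAddSubgroup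
  omega

end Linear

theorem add_div_add_le_max_div {K : Type*} [Field K] [LinearOrder K] [IsStrictOrderedRing K]
    {a b c d : K} (hb : 0 < b) (hd : 0 < d) :
    (a + c) / (b + d) ≤ max (a / b) (c / d) := by
  rw [div_le_iff₀ (add_pos hb hd)]
  have h₁ : a ≤ max (a / b) (c / d) * b := (div_le_iff₀ hb).mp (le_max_left _ _)
  have h₂ : c ≤ max (a / b) (c / d) * d := (div_le_iff₀ hd).mp (le_max_right _ _)
  linarith

theorem Rep.shortExact_of_exact {k G : Type*} [CommRing k] [Monoid G] {A B C : Rep k G}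
    (f : A ⟶ B) (g : B ⟶ C) (hf : Function.Injective f.hom) (hg : Function.Surjective g.hom)
    (hfg : Function.Exact f.hom g.hom) :
    (ShortComplex.mk f g (by ext x; exact hfg.apply_apply_eq_zero x)).ShortExact where
  exact := by
    rw [← ShortComplex.exact_map_iff_of_faithful _ (forget₂ (Rep k G) (ModuleCat k))]
    exact (ShortComplex.ShortExact.moduleCat_exact_iff_function_exact _).mpr hfg
  mono_f := (Rep.mono_iff_injective f).mpr hf
  epi_g := (Rep.epi_iff_surjective g).mpr hg

theorem Rep.lenZ_eq_add_of_shortExact {k G : Type*} [CommRing k] [Monoid G]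
    {X : ShortComplex (Rep k G)} (hX : X.ShortExact) [Finite X.X₂] :
    lenZ X.X₂ = lenZ X.X₁ + lenZ X.X₃ :=
  lenZ_eq_add_of_exact ((Rep.mono_iff_injective _).mp hX.mono_f)
    ((Rep.epi_iff_surjective _).mp hX.epi_g)
    ((ShortComplex.ShortExact.moduleCat_exact_iff_function_exact _).mp
      (hX.exact.map (forget₂ (Rep k G) (ModuleCat k))))

namespace groupCohomology

theorem lenZ_add_le_of_shortExact {k G : Type u} [CommRing k] [Group G]
    {X : ShortComplex (Rep k G)} (hX : X.ShortExact)
    [Finite (groupCohomology X.X₂ 0)] [Finite (groupCohomology X.X₃ 0)]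
    [Finite (groupCohomology X.X₁ 1)] [Finite (groupCohomology X.X₂ 1)]
    [Finite (groupCohomology X.X₃ 1)] :
    lenZ (groupCohomology X.X₁ 0) + lenZ (groupCohomology X.X₃ 0) +
        lenZ (groupCohomology X.X₂ 1) ≤
      lenZ (groupCohomology X.X₂ 0) + lenZ (groupCohomology X.X₁ 1) +
        lenZ (groupCohomology X.X₃ 1) := by
  -- `H⁰` is left exact, which starts the long exact sequence with `0 →`
  have : Mono X.f := hX.mono_f
  have exact_of {S : ShortComplex (ModuleCat k)} (h : S.Exact) : Function.Exact S.f S.g :=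
    (ShortComplex.ShortExact.moduleCat_exact_iff_function_exact S).mp h
  exact lenZ_add_le_of_exact ((ModuleCat.mono_iff_injective _).mp (mono_map_0_of_mono X.f))
    (exact_of (mapShortComplex₂_exact hX 0)) (exact_of (mapShortComplex₃_exact hX rfl))
    (exact_of (mapShortComplex₁_exact hX rfl)) (exact_of (mapShortComplex₂_exact hX 1))

end groupCohomology

theorem chiBar1_le_max_of_shortExact {G : Type} [Group G] {X : ShortComplex (Rep ℤ G)}
    (hX : X.ShortExact) [Finite X.X₁] [Finite X.X₂] [Finite X.X₃]
    [Nontrivial X.X₁] [Nontrivial X.X₃]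
    [Finite (groupCohomology X.X₂ 0)] [Finite (groupCohomology X.X₃ 0)]
    [Finite (groupCohomology X.X₁ 1)] [Finite (groupCohomology X.X₂ 1)]
    [Finite (groupCohomology X.X₃ 1)] :
    chiBar1 X.X₂ ≤ max (chiBar1 X.X₁) (chiBar1 X.X₃) := by
  have key := groupCohomology.lenZ_add_le_of_shortExact hX
  have pos₁ : (0 : ℚ) < lenZ X.X₁ := by exact_mod_cast lenZ_pos X.X₁
  have pos₃ : (0 : ℚ) < lenZ X.X₃ := by exact_mod_cast lenZ_pos X.X₃
  calc chiBar1 X.X₂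
      ≤ ((lenZ (groupCohomology X.X₁ 1) - lenZ (groupCohomology X.X₁ 0) : ℚ) +
          (lenZ (groupCohomology X.X₃ 1) - lenZ (groupCohomology X.X₃ 0))) /
          (lenZ X.X₁ + lenZ X.X₃) := by
        rw [chiBar1, Rep.lenZ_eq_add_of_shortExact hX, Nat.cast_add]
        gcongr
        have keyQ := (Nat.cast_le (α := ℚ)).mpr key
        push_cast at keyQ
        linarith
    _ ≤ max (chiBar1 X.X₁) (chiBar1 X.X₃) := add_div_add_le_max_div pos₁ pos₃

theorem stmt1_general {G : Type} [Group G]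
    (M' M M'' : Rep ℤ G)
    -- the modules are finite discrete `G`-modules with continuous action
    [Finite M'] [Finite M] [Finite M'']
    -- `M'` and `M''` are nonzero
    (hne' : Nontrivial M') (hne'' : Nontrivial M'')
    -- a short exact sequence `0 → M' → M → M'' → 0`
    (f : M' ⟶ M) (g : M ⟶ M'')
    (hf : Function.Injective f.hom) (hg : Function.Surjective g.hom)
    (hfg' : Function.Exact f.hom g.hom)
    -- all cohomology groups in degrees ≤ 2 are finite
    (hfin' : ∀ i ≤ 2, Finite (groupCohomology M' i))
    (hfin : ∀ i ≤ 2, Finite (groupCohomology M i))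
    (hfin'' : ∀ i ≤ 2, Finite (groupCohomology M'' i)) :
    chiBar1 M ≤ max (chiBar1 M') (chiBar1 M'') := by
  have : Finite (groupCohomology M 0) := hfin 0 (by norm_num)
  have : Finite (groupCohomology M'' 0) := hfin'' 0 (by norm_num)
  have : Finite (groupCohomology M' 1) := hfin' 1 (by norm_num)
  have : Finite (groupCohomology M 1) := hfin 1 (by norm_num)
  have : Finite (groupCohomology M'' 1) := hfin'' 1 (by norm_num)
  have hX := Rep.shortExact_of_exact f g hf hg hfg'
  exact chiBar1_le_max_of_shortExact (X := ShortComplex.mk f g _) hX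

theorem stmt1 {G : Type} [Group G] [TopologicalSpace G] [IsTopologicalGroup G]
    [CompactSpace G] [TotallyDisconnectedSpace G] [T2Space G]
    (hfg : TopFG G)
    (M' M M'' : Rep ℤ G)
    -- the modules are finite discrete `G`-modules with continuous action
    [Finite M'] [Finite M] [Finite M'']
    (hcont' : ∀ a : M', IsOpen {g : G | M'.ρ g a = a})
    (hcont : ∀ a : M, IsOpen {g : G | M.ρ g a = a})
    (hcont'' : ∀ a : M'', IsOpen {g : G | M''.ρ g a = a})
    -- `M'` and `M''` are nonzero
    (hne' : Nontrivial M') (hne'' : Nontrivial M'')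
    -- a short exact sequence `0 → M' → M → M'' → 0`
    (f : M' ⟶ M) (g : M ⟶ M'')
    (hf : Function.Injective f.hom) (hg : Function.Surjective g.hom)
    (hfg' : Function.Exact f.hom g.hom)
    -- all cohomology groups in degrees ≤ 2 are finite
    (hfin' : ∀ i ≤ 2, Finite (groupCohomology M' i))
    (hfin : ∀ i ≤ 2, Finite (groupCohomology M i))
    (hfin'' : ∀ i ≤ 2, Finite (groupCohomology M'' i)) :
    chiBar1 M ≤ max (chiBar1 M') (chiBar1 M'') :=
  stmt1_general M' M M'' hne' hne'' f g hf hg hfg' hfin' hfin hfin''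
end

section
/- Let G be a profinite group and A a projective profinite Z_p[[G]]-module such that for every irreducible Z_p[[G]]-module M one has dim Hom_{Z_p[[G]]}(A,M) = dim M. Then A is isomorphic to Z_p[[G]] as a Z_p[[G]]-module. -/
section

variable (p : ℕ) [Fact p.Prime] (G : Type) [Group G] [TopologicalSpace G]

/-- A profinite `ℤ_p[[G]]`-module. -/
class ProfiniteZpGModule (K : Type) [AddCommGroup K] [Module ℤ_[p] K]
    [TopologicalSpace K] (ρ : Representation ℤ_[p] G K) : Prop where
  compact : CompactSpace K
  t2 : T2Space K
  td : TotallyDisconnectedSpace K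
  addGroup : IsTopologicalAddGroup K
  contSMul : ContinuousSMul ℤ_[p] K
  contAction : Continuous fun q : G × K => ρ q.1 q.2

/-- An irreducible `ℤ_p[[G]]`-module. -/
structure IrredMod where
  carrier : Type
  [addCommGroup : AddCommGroup carrier]
  [module : Module ℤ_[p] carrier]
  [finite : Finite carrier]
  ρ : Representation ℤ_[p] G carrier
  cont : ∀ a : carrier, IsOpen {g : G | ρ g a = a}
  nontrivial : Nontrivial carrier
  irred : ∀ W : Submodule ℤ_[p] carrier,
    (∀ (g : G) (m : carrier), m ∈ W → ρ g m ∈ W) → W = ⊥ ∨ W = ⊤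

attribute [instance] IrredMod.addCommGroup IrredMod.module IrredMod.finite

/-- `Hom_{ℤ_p[[G]]}(K, M)` for an irreducible module `M`. -/
def HomGMod {K : Type} [AddCommGroup K] [Module ℤ_[p] K] [TopologicalSpace K]
    (ρ : Representation ℤ_[p] G K) (M : IrredMod p G) : Type :=
  {f : K →ₗ[ℤ_[p]] M.carrier //
    (@Continuous K M.carrier _ ⊥ f) ∧ ∀ (g : G) (k : K), f (ρ g k) = M.ρ g (f k)}

/-- A projective profinite `ℤ_p[[G]]`-module: continuous `G`-maps to quotients of
profinite `ℤ_p[[G]]`-modules lift. -/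
def IsProjectiveMod {A : Type} [AddCommGroup A] [Module ℤ_[p] A] [TopologicalSpace A]
    (ρA : Representation ℤ_[p] G A) : Prop :=
  ∀ (X : Type) [AddCommGroup X] [Module ℤ_[p] X] [TopologicalSpace X]
    (ρX : Representation ℤ_[p] G X) (_ : ProfiniteZpGModule p G X ρX)
    (Y : Type) [AddCommGroup Y] [Module ℤ_[p] Y] [TopologicalSpace Y]
    (ρY : Representation ℤ_[p] G Y) (_ : ProfiniteZpGModule p G Y ρY)
    (f : X →ₗ[ℤ_[p]] Y), Continuous f → Function.Surjective f →
    (∀ (g : G) (x : X), f (ρX g x) = ρY g (f x)) →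
    ∀ u : A →ₗ[ℤ_[p]] Y, Continuous u → (∀ (g : G) (a : A), u (ρA g a) = ρY g (u a)) →
    ∃ v : A →ₗ[ℤ_[p]] X, Continuous v ∧ (∀ (g : G) (a : A), v (ρA g a) = ρX g (v a)) ∧
      f ∘ₗ v = u

/-- `(R, e)` is the free profinite `ℤ_p[[G]]`-module of rank one, i.e. `ℤ_p[[G]]` itself:
continuous `G`-maps out of `R` correspond uniquely to the image of `e`. -/
def IsFreeOfRankOne {R : Type} [AddCommGroup R] [Module ℤ_[p] R] [TopologicalSpace R]
    (ρR : Representation ℤ_[p] G R) (e : R) : Prop :=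
  ∀ (K : Type) [AddCommGroup K] [Module ℤ_[p] K] [TopologicalSpace K]
    (ρK : Representation ℤ_[p] G K) (_ : ProfiniteZpGModule p G K ρK) (k : K),
    ∃! φ : R →ₗ[ℤ_[p]] K,
      (Continuous φ ∧ ∀ (g : G) (r : R), φ (ρR g r) = ρK g (φ r)) ∧ φ e = k

end

namespace Representation

variable {k G V W : Type*} [CommSemiring k] [Monoid G] [AddCommMonoid V] [Module k V]
  [AddCommMonoid W] [Module k W] (ρ : Representation k G V)

theorem mem_invtSubmodule_iff_forall_mem {U : Submodule k V} :
    U ∈ ρ.invtSubmodule ↔ ∀ g, ∀ x ∈ U, ρ g x ∈ U := by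
  simp only [mem_invtSubmodule, Module.End.mem_invtSubmodule_iff_forall_mem_of_mem]

theorem le_comap_of_mem_invtSubmodule {U : Submodule k V} (hU : U ∈ ρ.invtSubmodule) (g : G) :
    U ≤ U.comap (ρ g) :=
  (Module.End.mem_invtSubmodule _).mp (ρ.mem_invtSubmodule.mp hU g)

theorem range_mem_invtSubmodule {σ : Representation k G W} (f : V →ₗ[k] W)
    (hf : ∀ g x, f (ρ g x) = σ g (f x)) : LinearMap.range f ∈ σ.invtSubmodule :=
  σ.mem_invtSubmodule_iff_forall_mem.mpr fun g _ ⟨x, hx⟩ => ⟨ρ g x, hx ▸ hf g x⟩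

end Representation

theorem Submodule.card_lt_card_of_ne_top {R M : Type*} [Ring R] [AddCommGroup M] [Module R M]
    [Finite M] {W : Submodule R M} (hW : W ≠ ⊤) : Nat.card W < Nat.card M := by
  obtain ⟨x, -, hx⟩ := SetLike.exists_of_lt (lt_top_iff_ne_top.mpr hW)
  exact Finite.card_subtype_lt hx

theorem PadicInt.card_eq_pow_lenZ {p : ℕ} [Fact p.Prime] (N : Type*) [AddCommGroup N]
    [Module ℤ_[p] N] [Finite N] : Nat.card N = p ^ lenZ N := by
  refine Nat.eq_prime_pow_of_unique_prime_dvd Nat.card_pos.ne' fun {q} hq hqN => ?_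
  have := Fact.mk hq
  obtain ⟨x, hx⟩ := exists_prime_addOrderOf_dvd_card' q hqN
  by_contra hqp
  -- A prime `q ≠ p` is a unit of `ℤ_[p]`, so it cannot kill the nonzero element `x`.
  have hunit : IsUnit (q : ℤ_[p]) := PadicInt.isUnit_iff.mpr
    (PadicInt.norm_natCast_eq_one_iff.mpr ((Nat.coprime_primes Fact.out hq).mpr (Ne.symm hqp)))
  have hqx : (q : ℤ_[p]) • x = 0 := by
    rw [Nat.cast_smul_eq_nsmul, ← hx, addOrderOf_nsmul_eq_zero]
  rw [hunit.smul_eq_zero.mp hqx, addOrderOf_zero] at hx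
  exact hq.one_lt.ne hx

namespace ProfiniteZpGModule

open Topology

variable {p : ℕ} [Fact p.Prime] {G : Type} [Group G] [TopologicalSpace G]
variable {K : Type} [AddCommGroup K] [Module ℤ_[p] K] [TopologicalSpace K]
  {ρ : Representation ℤ_[p] G K}

theorem exists_isOpen_mem_invtSubmodule_subset [CompactSpace G] [ProfiniteZpGModule p G K ρ]
    {V : Set K} (hV : V ∈ 𝓝 0) :
    ∃ U : Submodule ℤ_[p] K, U ∈ ρ.invtSubmodule ∧ IsOpen (U : Set K) ∧ (U : Set K) ⊆ V := by
  obtain ⟨_, _, _, _, _, hρ⟩ := ‹ProfiniteZpGModule p G K ρ›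
  obtain ⟨O, hOV, hO, h0O⟩ := mem_nhds_iff.mp hV
  obtain ⟨C, hC, h0C, hCO⟩ := compact_exists_isClopen_in_isOpen hO h0O
  obtain ⟨H, hHC⟩ :=
    IsTopologicalAddGroup.exist_openAddSubgroup_sub_clopen_nhds_of_zero hC h0C
  -- The largest `G`-stable submodule inside `H`; it is open because `ℤ_[p] × G` is compact.
  let U : Submodule ℤ_[p] K :=
    { carrier := {x | ∀ (c : ℤ_[p]) (g : G), c • ρ g x ∈ H}
      add_mem' := fun hx hy c g => by rw [map_add, smul_add]; exact H.add_mem (hx c g) (hy c g)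
      zero_mem' := fun c g => by simp
      smul_mem' := fun c' x hx c g => by rw [map_smul, smul_smul]; exact hx _ g }
  refine ⟨U, ρ.mem_invtSubmodule_iff_forall_mem.mpr fun g x hx c g' => ?_, ?_,
    fun x hx => hOV (hCO (hHC (by simpa using hx 1 1)))⟩
  · rw [← Module.End.mul_apply, ← map_mul]
    exact hx c (g' * g)
  · have hcont : Continuous fun z : K × (ℤ_[p] × G) => z.2.1 • ρ z.2.2 z.1 :=
      continuous_snd.fst.smul (hρ.comp (continuous_snd.snd.prodMk continuous_fst))
    refine isOpen_iff_mem_nhds.mpr fun x hx => ?_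
    have := isCompact_univ.eventually_forall_of_forall_eventually (x₀ := x)
      (P := fun y (q : ℤ_[p] × G) => q.1 • ρ q.2 y ∈ H) fun q _ =>
        hcont.continuousAt.preimage_mem_nhds (H.isOpen.mem_nhds (hx q.1 q.2))
    filter_upwards [this] with y hy c g using hy (c, g) trivial

theorem eq_top_of_forall_sup_eq_top [CompactSpace G] [ProfiniteZpGModule p G K ρ]
    {C : Submodule ℤ_[p] K} (hC : IsClosed (C : Set K))
    (h : ∀ U ∈ ρ.invtSubmodule, IsOpen (U : Set K) → C ⊔ U = ⊤) : C = ⊤ := by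
  obtain ⟨_, _, _, _, _, _⟩ := ‹ProfiniteZpGModule p G K ρ›
  refine eq_top_iff.mpr fun x _ => ?_
  by_contra hx
  have hV : {v : K | x - v ∉ C} ∈ 𝓝 (0 : K) :=
    (hC.isOpen_compl.preimage (continuous_const.sub continuous_id)).mem_nhds (by simpa using hx)
  obtain ⟨U, hU, hUo, hUV⟩ := exists_isOpen_mem_invtSubmodule_subset (ρ := ρ) hV
  obtain ⟨c, hc, u, hu, rfl⟩ := Submodule.mem_sup.mp (h U hU hUo ▸ Submodule.mem_top (x := x))
  exact hUV hu (by simpa using hc)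

end ProfiniteZpGModule

structure FinZpGModule (p : ℕ) [Fact p.Prime] (G : Type) [Group G] [TopologicalSpace G] where
  carrier : Type
  [addCommGroup : AddCommGroup carrier]
  [module : Module ℤ_[p] carrier]
  [finite : Finite carrier]
  [topologicalSpace : TopologicalSpace carrier]
  [discreteTopology : DiscreteTopology carrier]
  [continuousSMul : ContinuousSMul ℤ_[p] carrier]
  ρ : Representation ℤ_[p] G carrier
  continuous_action : Continuous fun q : G × carrier => ρ q.1 q.2

attribute [instance] FinZpGModule.addCommGroup FinZpGModule.module FinZpGModule.finite
  FinZpGModule.topologicalSpace FinZpGModule.discreteTopology FinZpGModule.continuousSMul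

noncomputable section

namespace FinZpGModule

open Representation

variable {p : ℕ} [Fact p.Prime] {G : Type} [Group G] [TopologicalSpace G]

instance (N : FinZpGModule p G) : ProfiniteZpGModule p G N.carrier N.ρ where
  compact := inferInstance
  t2 := inferInstance
  td := inferInstance
  addGroup := inferInstance
  contSMul := inferInstance
  contAction := N.continuous_action

def ofQuotient {K : Type} [AddCommGroup K] [Module ℤ_[p] K] [TopologicalSpace K]
    (ρ : Representation ℤ_[p] G K) [hK : ProfiniteZpGModule p G K ρ]
    (U : Submodule ℤ_[p] K) (hU : U ∈ ρ.invtSubmodule) (hUo : IsOpen (U : Set K)) :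
    FinZpGModule p G :=
  haveI := hK.addGroup
  haveI := hK.compact
  haveI := hK.contSMul
  haveI : DiscreteTopology (K ⧸ U) := QuotientAddGroup.discreteTopology hUo
  haveI : Finite (K ⧸ U) := AddSubgroup.quotient_finite_of_isOpen U.toAddSubgroup hUo
  { carrier := K ⧸ U
    ρ := ρ.quotient U (ρ.le_comap_of_mem_invtSubmodule hU)
    continuous_action := continuous_prod_of_discrete_right.mpr fun q => by
      obtain ⟨x, rfl⟩ := U.mkQ_surjective q
      exact U.continuous_mkQ.comp (hK.contAction.comp (continuous_id.prodMk continuous_const)) }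

-- Reducible, so that instances on `(N.sub W hW).carrier` are found as those on `↥W`.
abbrev sub (N : FinZpGModule p G) (W : Submodule ℤ_[p] N.carrier)
    (hW : W ∈ N.ρ.invtSubmodule) : FinZpGModule p G where
  carrier := W
  ρ := N.ρ.subrepresentation W (N.ρ.le_comap_of_mem_invtSubmodule hW)
  continuous_action := (N.continuous_action.comp
    (continuous_fst.prodMk (continuous_subtype_val.comp continuous_snd))).subtype_mk _

def quot (N : FinZpGModule p G) (W : Submodule ℤ_[p] N.carrier) (hW : W ∈ N.ρ.invtSubmodule) :
    FinZpGModule p G :=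
  ofQuotient N.ρ W hW (isOpen_discrete _)

variable {K : Type} [AddCommGroup K] [Module ℤ_[p] K] [TopologicalSpace K]
  (ρ : Representation ℤ_[p] G K)

-- `Hom_{ℤ_p[[G]]}(K, N)`
def contGHom (N : FinZpGModule p G) : Submodule ℤ_[p] (K →ₗ[ℤ_[p]] N.carrier) where
  carrier := {f | Continuous f ∧ ∀ g k, f (ρ g k) = N.ρ g (f k)}
  add_mem' hf hg := ⟨hf.1.add hg.1, fun g k => by simp [hf.2, hg.2]⟩
  zero_mem' := ⟨continuous_const, by simp⟩
  smul_mem' c f hf := ⟨hf.1.const_smul c, fun g k => by simp [hf.2]⟩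

def contGHom.postcomp {N N' : FinZpGModule p G} (π : N.carrier →ₗ[ℤ_[p]] N'.carrier)
    (hπ : ∀ g x, π (N.ρ g x) = N'.ρ g (π x)) :
    contGHom ρ N →ₗ[ℤ_[p]] contGHom ρ N' where
  toFun f := ⟨π ∘ₗ f.1, (continuous_of_discreteTopology (f := π)).comp f.2.1,
    fun g k => by simp [f.2.2, hπ]⟩
  map_add' _ _ := by ext; simp
  map_smul' _ _ := by ext; simp

variable {ρ}

def contGHom.precomp {K' : Type} [AddCommGroup K'] [Module ℤ_[p] K'] [TopologicalSpace K']
    {ρ' : Representation ℤ_[p] G K'} (v : K' →ₗ[ℤ_[p]] K) (hv : Continuous v)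
    (hve : ∀ g x, v (ρ' g x) = ρ g (v x)) (N : FinZpGModule p G) :
    contGHom ρ N →ₗ[ℤ_[p]] contGHom ρ' N where
  toFun f := ⟨f.1 ∘ₗ v, f.2.1.comp hv, fun g k => by simp [hve, f.2.2]⟩
  map_add' _ _ := by ext; simp
  map_smul' _ _ := by ext; simp

def contGHom.codRestrict {N : FinZpGModule p G} (f : contGHom ρ N)
    (W : Submodule ℤ_[p] N.carrier) (hW : W ∈ N.ρ.invtSubmodule) (hf : ∀ k, f.1 k ∈ W) :
    contGHom ρ (N.sub W hW) :=
  ⟨LinearMap.codRestrict W f.1 hf, f.2.1.subtype_mk _, fun g k => Subtype.ext (f.2.2 g k)⟩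

variable (ρ) in
def mkQ [ProfiniteZpGModule p G K ρ] (U : Submodule ℤ_[p] K) (hU : U ∈ ρ.invtSubmodule)
    (hUo : IsOpen (U : Set K)) : contGHom ρ (ofQuotient ρ U hU hUo) :=
  ⟨U.mkQ, U.continuous_mkQ, fun _ _ => rfl⟩

theorem card_contGHom_of_isFreeOfRankOne {e : K} (hfree : IsFreeOfRankOne p G ρ e)
    (N : FinZpGModule p G) : Nat.card (contGHom ρ N) = Nat.card N.carrier := by
  refine Nat.card_eq_of_bijective (fun f => f.1 e) ⟨fun f f' hff' => ?_, fun k => ?_⟩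
  · exact Subtype.ext <| (hfree N.carrier N.ρ inferInstance (f.1 e)).unique
      ⟨f.2, rfl⟩ ⟨f'.2, hff'.symm⟩
  · obtain ⟨φ, hφ, hφe⟩ := (hfree N.carrier N.ρ inferInstance k).exists
    exact ⟨⟨φ, hφ⟩, hφe⟩

theorem card_contGHom_eq_mul (hproj : IsProjectiveMod p G ρ) (N : FinZpGModule p G)
    (W : Submodule ℤ_[p] N.carrier) (hW : W ∈ N.ρ.invtSubmodule) :
    Nat.card (contGHom ρ N) =
      Nat.card (contGHom ρ (N.sub W hW)) * Nat.card (contGHom ρ (N.quot W hW)) := by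
  set ι := contGHom.postcomp ρ (N := N.sub W hW) (N' := N) W.subtype fun _ _ => rfl
  set π := contGHom.postcomp ρ (N := N) (N' := N.quot W hW) W.mkQ fun _ _ => rfl
  have hι : Function.Injective ι := fun f f' h =>
    Subtype.ext <| LinearMap.ext fun k =>
      Subtype.ext (LinearMap.congr_fun (congrArg Subtype.val h) k)
  have hπ : Function.Surjective π := fun u => by
    obtain ⟨v, hv, hve, hvu⟩ := hproj N.carrier N.ρ inferInstance (N.quot W hW).carrier
      (N.quot W hW).ρ inferInstance W.mkQ continuous_of_discreteTopology W.mkQ_surjective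
      (fun _ _ => rfl) u.1 u.2.1 u.2.2
    exact ⟨⟨v, hv, hve⟩, Subtype.ext hvu⟩
  have hker : LinearMap.ker π = LinearMap.range ι := by
    refine le_antisymm (fun f hf => ?_) (LinearMap.range_le_ker_iff.mpr ?_)
    · refine ⟨contGHom.codRestrict f W hW fun k => ?_, rfl⟩
      exact (Submodule.Quotient.mk_eq_zero W).mp (LinearMap.congr_fun (congrArg Subtype.val hf) k)
    · ext f k
      exact (Submodule.Quotient.mk_eq_zero W).mpr (f.1 k).2
  rw [(LinearMap.ker π).card_eq_card_quotient_mul_card,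
    Nat.card_congr (LinearMap.quotKerEquivOfSurjective π hπ).toEquiv, hker,
    Nat.card_congr (LinearEquiv.ofInjective ι hι).toEquiv.symm]

def toIrredMod (N : FinZpGModule p G) [IsSimpleOrder N.ρ.invtSubmodule] : IrredMod p G where
  carrier := N.carrier
  ρ := N.ρ
  cont a := (isOpen_discrete {a}).preimage
    (N.continuous_action.comp (continuous_id.prodMk continuous_const))
  nontrivial := (invtSubmodule.nontrivial_iff N.ρ).mp inferInstance
  irred W hW := by
    simpa [Subtype.ext_iff] using IsSimpleOrder.eq_bot_or_eq_top
      (⟨W, N.ρ.mem_invtSubmodule_iff_forall_mem.mpr hW⟩ : N.ρ.invtSubmodule)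

theorem isSimpleOrder_quot (N : FinZpGModule p G) {W : Submodule ℤ_[p] N.carrier}
    (hW : W ∈ N.ρ.invtSubmodule) (hWc : IsCoatom (⟨W, hW⟩ : N.ρ.invtSubmodule)) :
    IsSimpleOrder (N.quot W hW).ρ.invtSubmodule := by
  have : Nontrivial (N.carrier ⧸ W) :=
    Submodule.Quotient.nontrivial_iff.mpr fun h => hWc.1 (Subtype.ext h)
  have : Nontrivial (N.quot W hW).ρ.invtSubmodule := invtSubmodule.nontrivial_iff _ |>.mpr this
  refine ⟨fun ⟨W', hW'⟩ => ?_⟩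
  have hV : W'.comap W.mkQ ∈ N.ρ.invtSubmodule :=
    N.ρ.mem_invtSubmodule_iff_forall_mem.mpr fun g x hx =>
      ((N.quot W hW).ρ.mem_invtSubmodule_iff_forall_mem.mp hW') g _ hx
  have hWV : (⟨W, hW⟩ : N.ρ.invtSubmodule) ≤ ⟨_, hV⟩ :=
    W.ker_mkQ.symm.le.trans (LinearMap.ker_le_comap _)
  rcases hWc.le_iff.mp hWV with h | h <;> simp only [Subtype.ext_iff] at h ⊢
  · right
    exact Submodule.comap_injective_of_surjective W.mkQ_surjective
      (h.trans (Submodule.comap_top _).symm)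
  · left
    exact Submodule.comap_injective_of_surjective W.mkQ_surjective
      (h.trans (W.ker_mkQ.symm.trans (Submodule.comap_bot _).symm))

def homGModEquiv (N : FinZpGModule p G) [IsSimpleOrder N.ρ.invtSubmodule] :
    HomGMod p G ρ N.toIrredMod ≃ contGHom ρ N :=
  Equiv.subtypeEquivRight fun f => by
    change (@Continuous K N.carrier _ ⊥ f ∧ _) ↔
      (@Continuous K N.carrier _ N.topologicalSpace f ∧ _)
    rw [← DiscreteTopology.eq_bot (α := N.carrier)]
    exact Iff.rfl

theorem card_contGHom_of_isSimpleOrder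
    (hdim : ∀ M : IrredMod p G, lenZ (HomGMod p G ρ M) = lenZ M.carrier)
    (N : FinZpGModule p G) [IsSimpleOrder N.ρ.invtSubmodule] :
    Nat.card (contGHom ρ N) = Nat.card N.carrier := by
  have hlen : lenZ (contGHom ρ N) = lenZ N.carrier :=
    calc lenZ (contGHom ρ N) = lenZ (HomGMod p G ρ N.toIrredMod) := by
          rw [lenZ, lenZ, Nat.card_congr (homGModEquiv N)]
      _ = lenZ N.carrier := hdim N.toIrredMod
  rcases finite_or_infinite (contGHom ρ N) with hfin | hinf
  · rw [PadicInt.card_eq_pow_lenZ (p := p) (contGHom ρ N), hlen, ← PadicInt.card_eq_pow_lenZ]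
  · have hone := PadicInt.card_eq_pow_lenZ (p := p) N.carrier
    rw [← hlen, lenZ, Nat.card_eq_zero_of_infinite (α := contGHom ρ N)] at hone
    have : Nontrivial N.carrier := N.toIrredMod.nontrivial
    exact (Finite.one_lt_card.ne' (by simpa using hone)).elim

theorem card_contGHom_eq_card (hproj : IsProjectiveMod p G ρ)
    (hdim : ∀ M : IrredMod p G, lenZ (HomGMod p G ρ M) = lenZ M.carrier)
    (N : FinZpGModule p G) : Nat.card (contGHom ρ N) = Nat.card N.carrier := by
  induction hn : Nat.card N.carrier using Nat.strong_induction_on generalizing N with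
  | _ n ih =>
  rcases subsingleton_or_nontrivial N.carrier with hN | hN
  · rw [← hn, Nat.card_unique, Nat.card_eq_one_iff_unique.mpr ⟨hN, ⟨0⟩⟩]
  obtain ⟨⟨W, hW⟩, hWc⟩ := IsCoatomic.exists_coatom N.ρ.invtSubmodule
  have := N.isSimpleOrder_quot hW hWc
  have hWlt : Nat.card W < n :=
    hn ▸ Submodule.card_lt_card_of_ne_top fun h => hWc.1 (Subtype.ext h)
  rw [card_contGHom_eq_mul hproj N W hW, card_contGHom_of_isSimpleOrder hdim (N.quot W hW),
    ih _ hWlt (N.sub W hW) rfl, ← hn, W.card_eq_card_quotient_mul_card]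
  rfl

def rangeFiberEquiv (N : FinZpGModule p G) (W : Submodule ℤ_[p] N.carrier)
    (hW : W ∈ N.ρ.invtSubmodule) :
    {f : contGHom ρ N // LinearMap.range f.1 = W} ≃
      {f : contGHom ρ (N.sub W hW) // LinearMap.range f.1 = ⊤} where
  toFun f := ⟨contGHom.codRestrict f.1 W hW fun k => f.2.le (LinearMap.mem_range_self _ k), by
    show LinearMap.range (LinearMap.codRestrict W f.1.1 _) = ⊤
    rw [LinearMap.range_codRestrict, f.2, Submodule.comap_subtype_self]⟩
  invFun f := ⟨contGHom.postcomp ρ (N := N.sub W hW) W.subtype (fun _ _ => rfl) f.1, by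
    show LinearMap.range (W.subtype ∘ₗ f.1.1) = W
    rw [LinearMap.range_comp, f.2, Submodule.map_subtype_top]⟩
  left_inv _ := rfl
  right_inv _ := rfl

theorem card_surjective_contGHom_eq {K' : Type} [AddCommGroup K'] [Module ℤ_[p] K']
    [TopologicalSpace K'] {ρ' : Representation ℤ_[p] G K'}
    (hρ : ∀ N : FinZpGModule p G, Nat.card (contGHom ρ N) = Nat.card N.carrier)
    (hρ' : ∀ N : FinZpGModule p G, Nat.card (contGHom ρ' N) = Nat.card N.carrier)
    (N : FinZpGModule p G) :
    Nat.card {f : contGHom ρ N // LinearMap.range f.1 = ⊤} =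
      Nat.card {f : contGHom ρ' N // LinearMap.range f.1 = ⊤} := by
  classical
  induction hn : Nat.card N.carrier using Nat.strong_induction_on generalizing N with
  | _ n ih =>
  have := Fintype.ofFinite (Submodule ℤ_[p] N.carrier)
  have := Nat.finite_of_card_ne_zero ((hρ N).trans_ne Nat.card_pos.ne')
  have := Nat.finite_of_card_ne_zero ((hρ' N).trans_ne Nat.card_pos.ne')
  have hsum : ∑ W, Nat.card {f : contGHom ρ N // LinearMap.range f.1 = W} =
      ∑ W, Nat.card {f : contGHom ρ' N // LinearMap.range f.1 = W} := by
    rw [← Nat.card_sigma, ← Nat.card_sigma, Nat.card_congr (Equiv.sigmaFiberEquiv _),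
      Nat.card_congr (Equiv.sigmaFiberEquiv _), hρ, hρ']
  -- Sort maps by their image: the fibres over `W ≠ ⊤` agree by induction, hence so do
  -- those over `⊤`.
  have hfiber : ∀ W ∈ ({⊤}ᶜ : Finset (Submodule ℤ_[p] N.carrier)),
      Nat.card {f : contGHom ρ N // LinearMap.range f.1 = W} =
        Nat.card {f : contGHom ρ' N // LinearMap.range f.1 = W} := by
    intro W hWtop
    by_cases hW : W ∈ N.ρ.invtSubmodule
    · rw [Nat.card_congr (rangeFiberEquiv N W hW), Nat.card_congr (rangeFiberEquiv N W hW)]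
      refine ih _ (hn ▸ Submodule.card_lt_card_of_ne_top ?_) _ rfl
      simpa using hWtop
    · have hempty {L : Type} [AddCommGroup L] [Module ℤ_[p] L] [TopologicalSpace L]
          {σ : Representation ℤ_[p] G L} :
          IsEmpty {f : contGHom σ N // LinearMap.range f.1 = W} :=
        ⟨fun f => hW (f.2 ▸ range_mem_invtSubmodule σ f.1.1 f.1.2.2)⟩
      simp only [Nat.card_of_isEmpty]
  rwa [Fintype.sum_eq_add_sum_compl ⊤, Fintype.sum_eq_add_sum_compl ⊤,
    Finset.sum_congr rfl hfiber, Nat.add_right_cancel_iff] at hsum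

theorem exists_range_eq_top_of_card_eq {K' : Type} [AddCommGroup K'] [Module ℤ_[p] K']
    [TopologicalSpace K'] {ρ' : Representation ℤ_[p] G K'}
    (hρ : ∀ N : FinZpGModule p G, Nat.card (contGHom ρ N) = Nat.card N.carrier)
    (hρ' : ∀ N : FinZpGModule p G, Nat.card (contGHom ρ' N) = Nat.card N.carrier)
    {N : FinZpGModule p G} (f : contGHom ρ N) (hf : LinearMap.range f.1 = ⊤) :
    ∃ f' : contGHom ρ' N, LinearMap.range f'.1 = ⊤ := by
  have := Nat.finite_of_card_ne_zero ((hρ N).trans_ne Nat.card_pos.ne')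
  have : Nonempty {f : contGHom ρ N // LinearMap.range f.1 = ⊤} := ⟨⟨f, hf⟩⟩
  obtain ⟨⟨f', hf'⟩⟩ :=
    (Nat.card_pos_iff.mp (card_surjective_contGHom_eq hρ hρ' N ▸ Nat.card_pos)).1
  exact ⟨f', hf'⟩

end FinZpGModule

end

namespace ProfiniteZpGModule

open FinZpGModule

variable {p : ℕ} [Fact p.Prime] {G : Type} [Group G] [TopologicalSpace G]
variable {K : Type} [AddCommGroup K] [Module ℤ_[p] K] [TopologicalSpace K]
  {ρ : Representation ℤ_[p] G K}
variable {R : Type} [AddCommGroup R] [Module ℤ_[p] R] [TopologicalSpace R]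
  {ρR : Representation ℤ_[p] G R}

theorem exists_surjective_of_isFreeOfRankOne [CompactSpace G] [ProfiniteZpGModule p G K ρ]
    [CompactSpace R] {e : R} (hfree : IsFreeOfRankOne p G ρR e)
    (h : ∀ U (hU : U ∈ ρ.invtSubmodule) (hUo : IsOpen (U : Set K)),
      ∃ f : contGHom ρR (ofQuotient ρ U hU hUo), LinearMap.range f.1 = ⊤) :
    ∃ φ : R →ₗ[ℤ_[p]] K, Continuous φ ∧ (∀ g r, φ (ρR g r) = ρ g (φ r)) ∧
      Function.Surjective φ := by
  obtain ⟨_, _, _, _, _, _⟩ := ‹ProfiniteZpGModule p G K ρ›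
  choose φ hφ using fun a : K => (hfree K ρ inferInstance a).exists
  let ι := {U : Submodule ℤ_[p] K // U ∈ ρ.invtSubmodule ∧ IsOpen (U : Set K)}
  have : Nonempty ι := ⟨⟨⊤, Representation.invtSubmodule.top_mem ρ, isOpen_univ⟩⟩
  -- `a ∈ S U` says that the image of `a` generates `K ⧸ U`.
  let S : ι → Set K := fun U => {a | U.1 ⊔ LinearMap.range (φ a) = ⊤}
  have hS (U : ι) (a : K) : a ∈ S U ↔ ∃ f : contGHom ρR (ofQuotient ρ U.1 U.2.1 U.2.2),
      LinearMap.range f.1 = ⊤ ∧ f.1 e = U.1.mkQ a := by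
    set Q := ofQuotient ρ U.1 U.2.1 U.2.2
    set φa := contGHom.precomp (φ a) (hφ a).1.1 (hφ a).1.2 Q (mkQ ρ U.1 U.2.1 U.2.2)
    have hφa : φa.1 e = U.1.mkQ a := congrArg U.1.mkQ (hφ a).2
    have hrange : a ∈ S U ↔ LinearMap.range φa.1 = ⊤ := by
      show _ ↔ LinearMap.range (U.1.mkQ ∘ₗ φ a) = ⊤
      rw [LinearMap.range_comp, Submodule.map_mkQ_eq_top]
      rfl
    refine hrange.trans ⟨fun hf => ⟨φa, hf, hφa⟩, fun ⟨f, hf, hfe⟩ => ?_⟩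
    rwa [← Subtype.ext <|
      (hfree Q.carrier Q.ρ inferInstance (U.1.mkQ a)).unique ⟨f.2, hfe⟩ ⟨φa.2, hφa⟩]
  have hclosed (U : ι) : IsClosed (S U) := by
    have : DiscreteTopology (K ⧸ U.1) := QuotientAddGroup.discreteTopology U.2.2
    rw [show S U = U.1.mkQ ⁻¹' {q | ∃ f : contGHom ρR (ofQuotient ρ U.1 U.2.1 U.2.2),
      LinearMap.range f.1 = ⊤ ∧ f.1 e = q} from Set.ext (hS U)]
    exact (isClosed_discrete _).preimage U.1.continuous_mkQ
  have hne (U : ι) : (S U).Nonempty := by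
    obtain ⟨f, hf⟩ := h U.1 U.2.1 U.2.2
    obtain ⟨a, ha⟩ := U.1.mkQ_surjective (f.1 e)
    exact ⟨a, (hS U a).mpr ⟨f, hf, ha.symm⟩⟩
  have hdir : Directed (· ⊇ ·) S := fun U V =>
    ⟨⟨U.1 ⊓ V.1, Sublattice.inf_mem U.2.1 V.2.1, U.2.2.inter V.2.2⟩,
      fun _ ha => eq_top_mono (sup_le_sup_right inf_le_left _) ha,
      fun _ ha => eq_top_mono (sup_le_sup_right inf_le_right _) ha⟩
  obtain ⟨a, ha⟩ := IsCompact.nonempty_iInter_of_directed_nonempty_isCompact_isClosed S hdir hne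
    (fun U => (hclosed U).isCompact) hclosed
  refine ⟨φ a, (hφ a).1.1, (hφ a).1.2, LinearMap.range_eq_top.mp ?_⟩
  refine eq_top_of_forall_sup_eq_top (ρ := ρ) (isCompact_range (hφ a).1.1).isClosed
    fun U hU hUo => ?_
  rw [sup_comm]
  exact Set.mem_iInter.mp ha ⟨U, hU, hUo⟩

theorem surjective_of_comp_eq_id [CompactSpace G] [CompactSpace K]
    [ProfiniteZpGModule p G R ρR]
    (hK : ∀ N : FinZpGModule p G, Nat.card (contGHom ρ N) = Nat.card N.carrier)
    (hR : ∀ N : FinZpGModule p G, Nat.card (contGHom ρR N) = Nat.card N.carrier)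
    (v : K →ₗ[ℤ_[p]] R) (hv : Continuous v) (hve : ∀ g a, v (ρ g a) = ρR g (v a))
    (φ : R →ₗ[ℤ_[p]] K) (hφ : Continuous φ) (hφe : ∀ g r, φ (ρR g r) = ρ g (φ r))
    (hφv : φ ∘ₗ v = LinearMap.id) : Function.Surjective v := by
  obtain ⟨_, _, _, _, _, _⟩ := ‹ProfiniteZpGModule p G R ρR›
  refine LinearMap.range_eq_top.mp <|
    eq_top_of_forall_sup_eq_top (ρ := ρR) (isCompact_range hv).isClosed fun U hU hUo => ?_
  set D := LinearMap.range v ⊔ U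
  have hD : D ∈ ρR.invtSubmodule := Sublattice.sup_mem (ρ.range_mem_invtSubmodule v hve) hU
  have hDo : IsOpen (D : Set R) :=
    AddSubgroup.isOpen_mono (Submodule.toAddSubgroup_mono (le_sup_right : U ≤ D)) hUo
  -- Restriction along `v` is onto (it has the section given by `φ`), hence injective by counting;
  -- it kills the quotient map by `D`.
  set Φ := contGHom.precomp v hv hve (ofQuotient ρR D hD hDo)
  have hΦ : Function.Surjective Φ := fun u =>
    ⟨contGHom.precomp φ hφ hφe _ u, Subtype.ext <| by
      show (u.1 ∘ₗ φ) ∘ₗ v = u.1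
      rw [LinearMap.comp_assoc, hφv, LinearMap.comp_id]⟩
  have := Nat.finite_of_card_ne_zero ((hR (ofQuotient ρR D hD hDo)).trans_ne Nat.card_pos.ne')
  have hΦinj := (hΦ.bijective_of_nat_card_le (hR _ ▸ (hK _).ge)).1
  have hmkQ : mkQ ρR D hD hDo = 0 := hΦinj <| by
    rw [map_zero]
    ext a
    exact (Submodule.Quotient.mk_eq_zero D).mpr (Submodule.mem_sup_left ⟨a, rfl⟩)
  exact eq_top_iff.mpr fun x _ =>
    (Submodule.Quotient.mk_eq_zero D).mp (LinearMap.congr_fun (congrArg Subtype.val hmkQ) x)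

end ProfiniteZpGModule

theorem stmt9_general {p : ℕ} [Fact p.Prime] {G : Type} [Group G] [TopologicalSpace G]
    [CompactSpace G]
    (A : Type) [AddCommGroup A] [Module ℤ_[p] A] [TopologicalSpace A]
    (ρA : Representation ℤ_[p] G A) [ProfiniteZpGModule p G A ρA]
    (hproj : IsProjectiveMod p G ρA)
    (hdim : ∀ M : IrredMod p G, lenZ (HomGMod p G ρA M) = lenZ M.carrier)
    (R : Type) [AddCommGroup R] [Module ℤ_[p] R] [TopologicalSpace R]
    (ρR : Representation ℤ_[p] G R) [ProfiniteZpGModule p G R ρR]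
    (e : R) (hfree : IsFreeOfRankOne p G ρR e) :
    ∃ φ : A ≃ₗ[ℤ_[p]] R, Continuous φ ∧ Continuous φ.symm ∧
      ∀ (g : G) (a : A), φ (ρA g a) = ρR g (φ a) := by
  have hA := FinZpGModule.card_contGHom_eq_card hproj hdim
  have hR := FinZpGModule.card_contGHom_of_isFreeOfRankOne hfree
  have := ‹ProfiniteZpGModule p G A ρA›.compact
  have := ‹ProfiniteZpGModule p G R ρR›.compact
  obtain ⟨φ, hφ, hφe, hφs⟩ := ProfiniteZpGModule.exists_surjective_of_isFreeOfRankOne hfree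
    fun U hU hUo => FinZpGModule.exists_range_eq_top_of_card_eq hA hR
      (FinZpGModule.mkQ ρA U hU hUo) U.range_mkQ
  obtain ⟨v, hv, hve, hφv⟩ := hproj R ρR inferInstance A ρA inferInstance φ hφ hφs hφe
    LinearMap.id continuous_id fun _ _ => rfl
  have hvs := ProfiniteZpGModule.surjective_of_comp_eq_id hA hR v hv hve φ hφ hφe hφv
  have hvφ : v ∘ₗ φ = LinearMap.id := LinearMap.ext fun r => by
    obtain ⟨a, rfl⟩ := hvs r
    exact congrArg v (LinearMap.congr_fun hφv a)
  exact ⟨LinearEquiv.ofLinearMap v φ hvφ hφv, hv, hφ, hve⟩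

theorem stmt9 {p : ℕ} [Fact p.Prime] {G : Type} [Group G] [TopologicalSpace G]
    [IsTopologicalGroup G] [CompactSpace G] [TotallyDisconnectedSpace G] [T2Space G]
    (A : Type) [AddCommGroup A] [Module ℤ_[p] A] [TopologicalSpace A]
    (ρA : Representation ℤ_[p] G A) [ProfiniteZpGModule p G A ρA]
    (hproj : IsProjectiveMod p G ρA)
    (hdim : ∀ M : IrredMod p G, lenZ (HomGMod p G ρA M) = lenZ M.carrier)
    (R : Type) [AddCommGroup R] [Module ℤ_[p] R] [TopologicalSpace R]
    (ρR : Representation ℤ_[p] G R) [ProfiniteZpGModule p G R ρR]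
    (e : R) (hfree : IsFreeOfRankOne p G ρR e) :
    ∃ φ : A ≃ₗ[ℤ_[p]] R, Continuous φ ∧ Continuous φ.symm ∧
      ∀ (g : G) (a : A), φ (ρA g a) = ρR g (φ a) :=
  stmt9_general A ρA hproj hdim R ρR e hfree
end
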